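/- Let C be a finite skeletal category equipped with an epi-mono factorization system (P, Q), and let H be its hom-set matrix over ℚ, H c d = #Hom(c,d). Then det H equals the product over all objects c of C of #Aut(c). In particular det H ≠ 0 and H is invertible over ℚ. -/

import Mathlib

open CategoryTheory

/-!
By skeletality and uniqueness of factorizations, every `f : c ⟶ d` factors as `e ≫ m` with
`e ∈ P`, `m ∈ Q` through exactly one object `z`, and `Aut z` acts freely and transitively on
these factorizations by `(e, m) ↦ (e ≫ φ, φ⁻¹ ≫ m)`, freely because `e` is epi. Hence
`#Hom(c,d) = ∑ z, #P(c,z) · #Aut(z)⁻¹ · #Q(z,d)`, a factorization `H = A · D · B` with `D`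
diagonal. In a finite skeletal category an epi endomorphism is invertible, so epis `a ⟶ b` and
`b ⟶ a` force `a = b`: "there is a `P`-morphism `a ⟶ b`" is a partial order making `A` upper
triangular with diagonal entries `#Aut`, and dually for `B`. So
`det H = ∏ #Aut · ∏ #Aut⁻¹ · ∏ #Aut = ∏ #Aut`.
-/

theorem Matrix.det_of_eq_zero_of_not_le {m R : Type*} [Fintype m] [DecidableEq m]
    [PartialOrder m] [CommRing R] (M : Matrix m m R) (h : ∀ i j, ¬ i ≤ j → M i j = 0) :
    M.det = ∏ i, M i i := by
  let : Fintype (LinearExtension m) := inferInstanceAs (Fintype m)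
  let e : LinearExtension m ≃ m := Equiv.refl m
  rw [← M.det_submatrix_equiv_self e, Matrix.det_of_isUpperTriangular]
  · exact e.prod_comp fun i => M i i
  · intro i j hji
    exact h (e i) (e j) fun hij => (toLinearExtension.monotone hij).not_gt hji

theorem Nat.sum_card_subtype_eq_card_of_existsUnique {α β : Type*} [Fintype β] [Finite α]
    (R : β → α → Prop) (h : ∀ a, ∃! b, R b a) :
    ∑ b, Nat.card {a // R b a} = Nat.card α := by
  choose g hg using h
  have hR : ∀ b a, R b a ↔ g a = b := fun b a =>
    ⟨fun hr => ((hg a).2 b hr).symm, fun hgab => hgab ▸ (hg a).1⟩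
  simp_rw [hR, ← Nat.card_sigma, Nat.card_congr (Equiv.sigmaFiberEquiv g)]

namespace CategoryTheory

variable {C : Type*} [Category C]

instance {c : C} [Finite (c ⟶ c)] : Finite (Aut c) :=
  Finite.of_injective Iso.hom fun _ _ h => Iso.ext h

theorem isIso_of_epi_of_finite {c : C} [Finite (c ⟶ c)] (f : c ⟶ c) [Epi f] : IsIso f := by
  obtain ⟨g, hg⟩ := Finite.injective_iff_surjective.mp
    (fun g h (hgh : f ≫ g = f ≫ h) => (cancel_epi f).mp hgh) (𝟙 c)
  have : IsSplitMono f := IsSplitMono.mk' ⟨g, hg⟩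
  exact isIso_of_epi_of_isSplitMono f

theorem isIso_of_mono_of_finite {c : C} [Finite (c ⟶ c)] (f : c ⟶ c) [Mono f] : IsIso f := by
  obtain ⟨g, hg⟩ := Finite.injective_iff_surjective.mp
    (fun g h (hgh : g ≫ f = h ≫ f) => (cancel_mono f).mp hgh) (𝟙 c)
  have : IsSplitEpi f := IsSplitEpi.mk' ⟨g, hg⟩
  exact isIso_of_mono_of_isSplitEpi f

theorem Skeletal.eq_of_epi_of_epi (hC : Skeletal C) {a b : C} [Finite (a ⟶ a)]
    (f : a ⟶ b) (g : b ⟶ a) [Epi f] [Epi g] : a = b := by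
  have := isIso_of_epi_of_finite (f ≫ g)
  have : IsSplitMono f :=
    IsSplitMono.mk' ⟨g ≫ inv (f ≫ g), by rw [← Category.assoc, IsIso.hom_inv_id]⟩
  have := isIso_of_epi_of_isSplitMono f
  exact hC ⟨asIso f⟩

theorem Skeletal.eq_of_mono_of_mono (hC : Skeletal C) {a b : C} [Finite (a ⟶ a)]
    (f : a ⟶ b) (g : b ⟶ a) [Mono f] [Mono g] : a = b := by
  have := isIso_of_mono_of_finite (f ≫ g)
  have : IsSplitEpi g := IsSplitEpi.mk' ⟨inv (f ≫ g) ≫ f, by simp⟩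
  have := isIso_of_mono_of_isSplitEpi g
  exact (hC ⟨asIso g⟩).symm

theorem card_aut_eq_card_subtype {c : C} (W : MorphismProperty C)
    (hW : ∀ f : c ⟶ c, W f ↔ IsIso f) : Nat.card (Aut c) = Nat.card {f : c ⟶ c // W f} :=
  Nat.card_eq_of_bijective (fun φ : Aut c => ⟨φ.hom, (hW _).2 (Iso.isIso_hom φ)⟩)
    ⟨fun _ _ h => Iso.ext (congrArg Subtype.val h),
      fun f => ⟨@asIso _ _ _ _ f.1 ((hW _).1 f.2), rfl⟩⟩

namespace MorphismProperty

abbrev reachabilityOrder (W : MorphismProperty C) [W.IsMultiplicative]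
    (hW : ∀ {a b : C} (f : a ⟶ b) (g : b ⟶ a), W f → W g → a = b) : PartialOrder C where
  le a b := ∃ f : a ⟶ b, W f
  le_refl a := ⟨𝟙 a, W.id_mem a⟩
  le_trans _ _ _ := fun ⟨f, hf⟩ ⟨g, hg⟩ => ⟨f ≫ g, W.comp_mem f g hf hg⟩
  le_antisymm _ _ := fun ⟨f, hf⟩ ⟨g, hg⟩ => hW f g hf hg

theorem det_card_subtype {R : Type*} [CommRing R] [Fintype C] [DecidableEq C]
    (W : MorphismProperty C) [W.IsMultiplicative]
    (hW : ∀ {a b : C} (f : a ⟶ b) (g : b ⟶ a), W f → W g → a = b) :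
    (Matrix.of fun a b : C => (Nat.card {f : a ⟶ b // W f} : R)).det =
      ∏ a, (Nat.card {f : a ⟶ a // W f} : R) := by
  let := W.reachabilityOrder hW
  refine Matrix.det_of_eq_zero_of_not_le _ fun a b hab => ?_
  have : IsEmpty {f : a ⟶ b // W f} := ⟨fun f => hab ⟨f.1, f.2⟩⟩
  simp

end MorphismProperty

structure EpiMonoFactorizationSystem (C : Type*) [Category C] where
  P : MorphismProperty C
  Q : MorphismProperty C
  epi_of_P : ∀ {a b : C} (f : a ⟶ b), P f → Epi f
  mono_of_Q : ∀ {a b : C} (f : a ⟶ b), Q f → Mono f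
  P_of_isIso : ∀ {a b : C} (f : a ⟶ b), IsIso f → P f
  Q_of_isIso : ∀ {a b : C} (f : a ⟶ b), IsIso f → Q f
  P_comp : ∀ {a b c : C} (f : a ⟶ b) (g : b ⟶ c), P f → P g → P (f ≫ g)
  Q_comp : ∀ {a b c : C} (f : a ⟶ b) (g : b ⟶ c), Q f → Q g → Q (f ≫ g)
  exists_factorization : ∀ {c d : C} (f : c ⟶ d),
    ∃ (z : C) (e : c ⟶ z) (m : z ⟶ d), P e ∧ Q m ∧ e ≫ m = f
  unique_factorization : ∀ {c d z z' : C} (e : c ⟶ z) (e' : c ⟶ z') (m : z ⟶ d)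
    (m' : z' ⟶ d), P e → P e' → Q m → Q m' → e ≫ m = e' ≫ m' →
    ∃ φ : z ≅ z', e ≫ φ.hom = e' ∧ φ.hom ≫ m' = m

namespace EpiMonoFactorizationSystem

variable (F : EpiMonoFactorizationSystem C)

instance : F.P.IsMultiplicative where
  id_mem a := F.P_of_isIso (𝟙 a) inferInstance
  comp_mem := F.P_comp

instance : F.Q.IsMultiplicative where
  id_mem a := F.Q_of_isIso (𝟙 a) inferInstance
  comp_mem := F.Q_comp

def FactorsThrough {c d : C} (z : C) (f : c ⟶ d) : Prop :=
  ∃ (e : c ⟶ z) (m : z ⟶ d), F.P e ∧ F.Q m ∧ e ≫ m = f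

theorem existsUnique_factorsThrough (hC : Skeletal C) {c d : C} (f : c ⟶ d) :
    ∃! z, F.FactorsThrough z f := by
  obtain ⟨z, e, m, he, hm, rfl⟩ := F.exists_factorization f
  refine ⟨z, ⟨e, m, he, hm, rfl⟩, ?_⟩
  rintro z' ⟨e', m', he', hm', h⟩
  obtain ⟨φ, -, -⟩ := F.unique_factorization e' e m' m he' he hm' hm h
  exact hC ⟨φ⟩

theorem card_factorsThrough_mul_card_aut (c d z : C) :
    Nat.card {f : c ⟶ d // F.FactorsThrough z f} * Nat.card (Aut z) =
      Nat.card {e : c ⟶ z // F.P e} * Nat.card {m : z ⟶ d // F.Q m} := by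
  rw [← Nat.card_prod, ← Nat.card_prod]
  change Nat.card (_ × (z ≅ z)) = _
  choose e m he hm hem using fun f : {f : c ⟶ d // F.FactorsThrough z f} => f.2
  refine Nat.card_eq_of_bijective (fun p =>
    (⟨e p.1 ≫ p.2.hom, F.P_comp _ _ (he p.1) (F.P_of_isIso _ inferInstance)⟩,
      ⟨p.2.inv ≫ m p.1, F.Q_comp _ _ (F.Q_of_isIso _ inferInstance) (hm p.1)⟩))
    ⟨?_, ?_⟩
  · rintro ⟨f, φ⟩ ⟨g, ψ⟩ h
    simp only [Prod.mk.injEq, Subtype.mk.injEq] at h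
    obtain ⟨h₁, h₂⟩ := h
    have hfg : f = g := Subtype.ext <| by
      rw [← hem f, ← hem g]
      calc e f ≫ m f = (e f ≫ φ.hom) ≫ (φ.inv ≫ m f) := by simp
        _ = e g ≫ m g := by rw [h₁, h₂]; simp
    subst hfg
    have := F.epi_of_P _ (he f)
    exact Prod.ext rfl (Iso.ext ((cancel_epi (e f)).mp h₁))
  · rintro ⟨⟨e', he'⟩, ⟨m', hm'⟩⟩
    let f : {f : c ⟶ d // F.FactorsThrough z f} := ⟨e' ≫ m', e', m', he', hm', rfl⟩
    obtain ⟨φ, hφe, hφm⟩ :=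
      F.unique_factorization (e f) e' (m f) m' (he f) he' (hm f) hm' (hem f)
    exact ⟨(f, φ), by simp [hφe, ← hφm]⟩

theorem P_iff_isIso {c : C} [Finite (c ⟶ c)] (f : c ⟶ c) : F.P f ↔ IsIso f :=
  ⟨fun hf => have := F.epi_of_P f hf; isIso_of_epi_of_finite f, F.P_of_isIso f⟩

theorem Q_iff_isIso {c : C} [Finite (c ⟶ c)] (f : c ⟶ c) : F.Q f ↔ IsIso f :=
  ⟨fun hf => have := F.mono_of_Q f hf; isIso_of_mono_of_finite f, F.Q_of_isIso f⟩

theorem eq_of_P_of_P (hC : Skeletal C) {a b : C} [Finite (a ⟶ a)] (f : a ⟶ b) (g : b ⟶ a)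
    (hf : F.P f) (hg : F.P g) : a = b :=
  have := F.epi_of_P f hf
  have := F.epi_of_P g hg
  hC.eq_of_epi_of_epi f g

theorem eq_of_Q_of_Q (hC : Skeletal C) {a b : C} [Finite (a ⟶ a)] (f : a ⟶ b) (g : b ⟶ a)
    (hf : F.Q f) (hg : F.Q g) : a = b :=
  have := F.mono_of_Q f hf
  have := F.mono_of_Q g hg
  hC.eq_of_mono_of_mono f g

variable {K : Type*} [Field K] [CharZero K] [Fintype C] [∀ a b : C, Finite (a ⟶ b)]

theorem card_hom_eq_sum (hC : Skeletal C) (c d : C) :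
    (Nat.card (c ⟶ d) : K) = ∑ z, Nat.card {e : c ⟶ z // F.P e} *
      (Nat.card (Aut z) : K)⁻¹ * Nat.card {m : z ⟶ d // F.Q m} := by
  rw [← Nat.sum_card_subtype_eq_card_of_existsUnique (fun z (f : c ⟶ d) => F.FactorsThrough z f)
    (F.existsUnique_factorsThrough hC), Nat.cast_sum]
  refine Finset.sum_congr rfl fun z _ => ?_
  rw [mul_right_comm, eq_mul_inv_iff_mul_eq₀ (Nat.cast_ne_zero.mpr Nat.card_pos.ne')]
  exact_mod_cast F.card_factorsThrough_mul_card_aut c d z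

theorem homMatrix_eq_mul [DecidableEq C] (hC : Skeletal C) :
    Matrix.of (fun c d : C => (Nat.card (c ⟶ d) : K)) =
      Matrix.of (fun c z : C => (Nat.card {e : c ⟶ z // F.P e} : K)) *
        Matrix.diagonal (fun z : C => (Nat.card (Aut z) : K)⁻¹) *
        Matrix.of (fun z d : C => (Nat.card {m : z ⟶ d // F.Q m} : K)) := by
  ext c d
  rw [Matrix.mul_apply]
  simp only [Matrix.mul_diagonal, Matrix.of_apply]
  exact F.card_hom_eq_sum (K := K) hC c d

theorem det_homMatrix [DecidableEq C] (F : EpiMonoFactorizationSystem C) (hC : Skeletal C) :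
    (Matrix.of fun c d : C => (Nat.card (c ⟶ d) : K)).det =
      ∏ c : C, (Nat.card (Aut c) : K) := by
  rw [F.homMatrix_eq_mul hC, Matrix.det_mul, Matrix.det_mul, Matrix.det_diagonal,
    F.P.det_card_subtype (F.eq_of_P_of_P hC), F.Q.det_card_subtype (F.eq_of_Q_of_Q hC),
    ← Finset.prod_mul_distrib, ← Finset.prod_mul_distrib]
  refine Finset.prod_congr rfl fun c _ => ?_
  rw [← card_aut_eq_card_subtype _ F.P_iff_isIso, ← card_aut_eq_card_subtype _ F.Q_iff_isIso,
    mul_inv_cancel₀ (Nat.cast_ne_zero.mpr Nat.card_pos.ne'), one_mul]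

end EpiMonoFactorizationSystem

end CategoryTheory

/-- For a finite skeletal category with an epi-mono factorization system `(P, Q)`, the
determinant of the hom-set matrix `H c d = #Hom(c,d)` is the product of the orders of
the automorphism groups of the objects; in particular it is non-zero and `H` is
invertible over `ℚ`. -/
theorem det_homMatrix_eq_prod_card_aut {C : Type*} [Category C] [Fintype C]
    [DecidableEq C] [∀ a b : C, Finite (a ⟶ b)] (hskel : Skeletal C)
    (P Q : MorphismProperty C)
    (hPepi : ∀ {a b : C} (f : a ⟶ b), P f → Epi f)
    (hQmono : ∀ {a b : C} (f : a ⟶ b), Q f → Mono f)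
    (hPiso : ∀ {a b : C} (f : a ⟶ b), IsIso f → P f)
    (hQiso : ∀ {a b : C} (f : a ⟶ b), IsIso f → Q f)
    (hPcomp : ∀ {a b c : C} (f : a ⟶ b) (g : b ⟶ c), P f → P g → P (f ≫ g))
    (hQcomp : ∀ {a b c : C} (f : a ⟶ b) (g : b ⟶ c), Q f → Q g → Q (f ≫ g))
    (hfact : ∀ {c d : C} (f : c ⟶ d),
      ∃ (z : C) (e : c ⟶ z) (m : z ⟶ d), P e ∧ Q m ∧ e ≫ m = f)
    (huniq : ∀ {c d z z' : C} (e : c ⟶ z) (e' : c ⟶ z') (m : z ⟶ d) (m' : z' ⟶ d),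
      P e → P e' → Q m → Q m' → e ≫ m = e' ≫ m' →
      ∃ φ : z ≅ z', e ≫ φ.hom = e' ∧ φ.hom ≫ m' = m) :
    (Matrix.of fun c d : C => (Nat.card (c ⟶ d) : ℚ)).det =
      ∏ c : C, (Nat.card (Aut c) : ℚ) ∧
    (Matrix.of fun c d : C => (Nat.card (c ⟶ d) : ℚ)).det ≠ 0 ∧
    IsUnit (Matrix.of fun c d : C => (Nat.card (c ⟶ d) : ℚ)).det := by
  let F : EpiMonoFactorizationSystem C :=
    ⟨P, Q, hPepi, hQmono, hPiso, hQiso, hPcomp, hQcomp, hfact, huniq⟩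
  have hdet := F.det_homMatrix (K := ℚ) hskel
  have hne : (Matrix.of fun c d : C => (Nat.card (c ⟶ d) : ℚ)).det ≠ 0 :=
    hdet ▸ Finset.prod_ne_zero_iff.mpr fun c _ => Nat.cast_ne_zero.mpr Nat.card_pos.ne'
  exact ⟨hdet, hne, hne.isUnit⟩
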